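/- arXiv:1205.3257 — 4 statements merged into one kernel-verified Lean document; each statement's English description precedes it below -/
import Mathlib

section
/- Let f be a real binary form of degree d ≥ 1. Then f can be written as a sum f = Σ_{i=1}^r c_i (a_i x + b_i y)^d with real coefficients c_i and pairwise non-proportional real linear forms a_i x + b_i y if and only if the binary form p = Π_{i=1}^r (b_i x - a_i y) annihilates f under the apolarity action, i.e., ∂p(f) = 0, where ∂p denotes the differential operator obtained from p by substituting ∂/∂x for x and ∂/∂y for y. -/
/-! Since partial derivatives commute, `h ↦ ∂h` is an algebra homomorphism into the
endomorphisms of `ℝ[x, y]`. For `ℓ = u x + v y` and `ℓ^⊥ = v x - u y` one has `∂ℓ^⊥ (ℓ^m) = 0`,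
which gives the easy direction, while `∂ℓ^⊥ (ℓ'^m)` is a nonzero multiple of `ℓ'^(m-1)` when `ℓ'`
is not proportional to `ℓ`.

Conversely, Euler's identity together with `(u² + v²) (x ∂x + y ∂y) = ℓ ∂ℓ + ℓ^⊥ ∂ℓ^⊥` shows that
for `ℓ ≠ 0` the forms of degree `m` killed by `∂ℓ^⊥` are the multiples of `ℓ^m`. Then induct on
the number of factors of `p = ℓ_k^⊥ q`: if `∂p f = 0`, then `∂ℓ_k^⊥ f` lies in the span of the
`ℓ_i^(d-1)`, `i ≠ k`, so it equals `∂ℓ_k^⊥ h` for some `h` in the span of the `ℓ_i^d`, and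
`f - h` is a multiple of `ℓ_k^d`. -/

open MvPolynomial

noncomputable def diffOp (h f : MvPolynomial (Fin 2) ℝ) : MvPolynomial (Fin 2) ℝ :=
  ∑ e ∈ h.support, (MvPolynomial.coeff e h) •
    ((fun p => pderiv (0 : Fin 2) p)^[e 0] ((fun p => pderiv (1 : Fin 2) p)^[e 1] f))

noncomputable def lin (a b : ℝ) : MvPolynomial (Fin 2) ℝ := a • X 0 + b • X 1

noncomputable def toForm (m : ℕ) (a : Fin (m + 1) → ℝ) : MvPolynomial (Fin 2) ℝ :=
  ∑ i : Fin (m + 1), a i • (X 0 ^ (i : ℕ) * X 1 ^ (m - (i : ℕ)))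

def hasWaringDecomp (d r : ℕ) (f : MvPolynomial (Fin 2) ℝ) : Prop :=
  ∃ c a b : Fin r → ℝ, f = ∑ i, c i • (lin (a i) (b i)) ^ d

noncomputable def waringRank (d : ℕ) (f : MvPolynomial (Fin 2) ℝ) : ℕ :=
  sInf {r | hasWaringDecomp d r f}

namespace MvPolynomial

variable {σ R : Type*} [CommRing R]

theorem pderiv_pderiv_comm (i j : σ) (f : MvPolynomial σ R) :
    pderiv i (pderiv j f) = pderiv j (pderiv i f) := by
  classical
  have : ⁅pderiv i, pderiv j⁆ = (0 : Derivation R (MvPolynomial σ R) (MvPolynomial σ R)) :=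
    derivation_ext fun k => by
      rw [Derivation.commutator_apply, pderiv_X, pderiv_X]
      simp [Pi.single_apply, apply_ite]
  rw [← sub_eq_zero, ← Derivation.commutator_apply, this, Derivation.zero_apply]

theorem IsHomogeneous.eq_C_coeff_zero {φ : MvPolynomial σ R} (h : φ.IsHomogeneous 0) :
    φ = C (coeff 0 φ) :=
  totalDegree_eq_zero_iff_eq_C.mp ((totalDegree_zero_iff_isHomogeneous σ).mpr h)

variable (σ R)

noncomputable def pderivAdjoin : Subalgebra R (Module.End R (MvPolynomial σ R)) :=
  Algebra.adjoin R (Set.range fun i => (pderiv i).toLinearMap)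

instance : IsMulCommutative (pderivAdjoin σ R) :=
  Algebra.isMulCommutative_adjoin R <| by
    rintro _ ⟨i, rfl⟩ _ ⟨j, rfl⟩
    exact LinearMap.ext fun f => pderiv_pderiv_comm i j f

/- `aeval` needs a commutative target, hence the detour through the (commutative) subalgebra
generated by the partial derivatives. -/
open scoped IsMulCommutative in
noncomputable def diffOpAlgHom : MvPolynomial σ R →ₐ[R] Module.End R (MvPolynomial σ R) :=
  (pderivAdjoin σ R).val.comp
    (aeval fun i => ⟨(pderiv i).toLinearMap, Algebra.subset_adjoin ⟨i, rfl⟩⟩)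

variable {σ R}

@[simp]
theorem diffOpAlgHom_X (i : σ) : diffOpAlgHom σ R (X i) = (pderiv i).toLinearMap := by
  simp [diffOpAlgHom]

theorem diffOpAlgHom_comm (p q f : MvPolynomial σ R) :
    diffOpAlgHom σ R p (diffOpAlgHom σ R q f) = diffOpAlgHom σ R q (diffOpAlgHom σ R p f) := by
  rw [← Module.End.mul_apply, ← map_mul, mul_comm, map_mul, Module.End.mul_apply]

end MvPolynomial

local notation "𝔇" => diffOpAlgHom (Fin 2) ℝ

theorem diffOpAlgHom_apply (h f : MvPolynomial (Fin 2) ℝ) : 𝔇 h f = diffOp h f := by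
  simp only [diffOpAlgHom, AlgHom.comp_apply, aeval_def, eval₂_eq', Fin.prod_univ_two, map_sum,
    LinearMap.sum_apply, diffOp]
  refine Finset.sum_congr rfl fun e _ => ?_
  simp [Algebra.smul_def, Module.End.pow_apply]

theorem lin_isHomogeneous (u v : ℝ) : (lin u v).IsHomogeneous 1 := by
  rw [lin, smul_eq_C_mul, smul_eq_C_mul]
  exact ((isHomogeneous_X ℝ 0).C_mul u).add ((isHomogeneous_X ℝ 1).C_mul v)

theorem lin_pow_isHomogeneous (u v : ℝ) (m : ℕ) : (lin u v ^ m).IsHomogeneous m := by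
  simpa using (lin_isHomogeneous u v).pow m

theorem diffOpAlgHom_lin_apply (u v : ℝ) (f : MvPolynomial (Fin 2) ℝ) :
    𝔇 (lin u v) f = u • pderiv 0 f + v • pderiv 1 f := by
  simp [lin]

theorem MvPolynomial.IsHomogeneous.diffOpAlgHom_lin {f : MvPolynomial (Fin 2) ℝ} {n : ℕ}
    (hf : f.IsHomogeneous n) (u v : ℝ) : (𝔇 (lin u v) f).IsHomogeneous (n - 1) := by
  rw [diffOpAlgHom_lin_apply]
  exact (homogeneousSubmodule _ _ _).add_mem ((homogeneousSubmodule _ _ _).smul_mem _ hf.pderiv)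
    ((homogeneousSubmodule _ _ _).smul_mem _ hf.pderiv)

theorem diffOpAlgHom_lin_lin_pow (u v a b : ℝ) (m : ℕ) :
    𝔇 (lin u v) (lin a b ^ m) = (m * (a * u + b * v)) • lin a b ^ (m - 1) := by
  have h0 : pderiv 0 (lin a b) = C a := by simp [lin, smul_eq_C_mul]
  have h1 : pderiv 1 (lin a b) = C b := by simp [lin, smul_eq_C_mul]
  rw [diffOpAlgHom_lin_apply, (pderiv 0).leibniz_pow, (pderiv 1).leibniz_pow, h0, h1]
  simp only [smul_eq_C_mul, nsmul_eq_mul, map_mul, map_add, map_natCast]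
  ring

theorem sq_add_sq_smul_sum_X_mul_pderiv (u v : ℝ) (f : MvPolynomial (Fin 2) ℝ) :
    (u ^ 2 + v ^ 2) • ∑ i, X i * pderiv i f =
      lin u v * 𝔇 (lin u v) f + lin v (-u) * 𝔇 (lin v (-u)) f := by
  rw [diffOpAlgHom_lin_apply, diffOpAlgHom_lin_apply]
  simp only [lin, Fin.sum_univ_two, smul_eq_C_mul, map_add, map_pow, map_neg]
  ring

theorem exists_eq_smul_lin_pow_of_diffOpAlgHom_eq_zero {u v : ℝ} (huv : (u, v) ≠ (0, 0))
    {n : ℕ} {f : MvPolynomial (Fin 2) ℝ} (hf : f.IsHomogeneous n) (h : 𝔇 (lin v (-u)) f = 0) :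
    ∃ c : ℝ, f = c • lin u v ^ n := by
  induction n generalizing f with
  | zero => exact ⟨coeff 0 f, by rw [pow_zero, ← C_eq_smul_one, ← hf.eq_C_coeff_zero]⟩
  | succ n ih =>
    obtain ⟨c, hc⟩ := ih (hf.diffOpAlgHom_lin u v) (by rw [diffOpAlgHom_comm, h, map_zero])
    have hsq : (u ^ 2 + v ^ 2) * (n + 1) ≠ 0 := by
      refine mul_ne_zero (fun h0 => huv ?_) n.cast_add_one_ne_zero
      have hu : u = 0 := by nlinarith [sq_nonneg u, sq_nonneg v]
      have hv : v = 0 := by nlinarith [sq_nonneg u, sq_nonneg v]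
      rw [hu, hv]
    have euler := sq_add_sq_smul_sum_X_mul_pderiv u v f
    rw [hf.sum_X_mul_pderiv, h, hc, mul_zero, add_zero, mul_smul_comm, ← pow_succ',
      ← Nat.cast_smul_eq_nsmul ℝ, smul_smul, Nat.cast_add_one] at euler
    refine ⟨c / ((u ^ 2 + v ^ 2) * (n + 1)), ?_⟩
    rw [div_eq_inv_mul, ← smul_smul, ← euler, smul_smul, inv_mul_cancel₀ hsq, one_smul]

section LinearFormPowers

variable {ι : Type*} (a b : ι → ℝ)

theorem span_lin_pow_le_map_diffOpAlgHom {s : Finset ι} {k : ι}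
    (hprop : ∀ i ∈ s, a i * b k ≠ a k * b i) (m : ℕ) :
    Submodule.span ℝ ((fun i => lin (a i) (b i) ^ m) '' s) ≤
      (Submodule.span ℝ ((fun i => lin (a i) (b i) ^ (m + 1)) '' s)).map
        (𝔇 (lin (b k) (-(a k)))) := by
  rw [Submodule.span_le]
  rintro _ ⟨i, hi, rfl⟩
  set c : ℝ := (m + 1 : ℕ) * (a i * b k + b i * -a k)
  have hc : c ≠ 0 :=
    mul_ne_zero (Nat.cast_ne_zero.mpr m.succ_ne_zero) fun h0 => hprop i hi (by linear_combination h0)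
  refine ⟨c⁻¹ • lin (a i) (b i) ^ (m + 1),
    Submodule.smul_mem _ _ (Submodule.subset_span ⟨i, hi, rfl⟩), ?_⟩
  rw [map_smul, diffOpAlgHom_lin_lin_pow, smul_smul, inv_mul_cancel₀ hc, one_smul,
    Nat.add_sub_cancel]

theorem mem_span_lin_pow_of_diffOpAlgHom_prod_eq_zero [DecidableEq ι]
    (hnz : ∀ i, (a i, b i) ≠ (0, 0)) (hprop : ∀ i j, i ≠ j → a i * b j ≠ a j * b i)
    (s : Finset ι) {n : ℕ} {f : MvPolynomial (Fin 2) ℝ} (hf : f.IsHomogeneous n)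
    (h : 𝔇 (∏ i ∈ s, lin (b i) (-(a i))) f = 0) :
    f ∈ Submodule.span ℝ ((fun i => lin (a i) (b i) ^ n) '' s) := by
  induction s using Finset.induction_on generalizing n f with
  | empty => simpa using h
  | insert k s hk ih =>
    rw [Finset.coe_insert, Set.image_insert_eq]
    have hk_mem : lin (a k) (b k) ^ n ∈
        Submodule.span ℝ (insert (lin (a k) (b k) ^ n) ((fun i => lin (a i) (b i) ^ n) '' s)) :=
      Submodule.subset_span (Set.mem_insert _ _)
    cases n with
    | zero =>
      rw [hf.eq_C_coeff_zero, C_eq_smul_one, ← pow_zero (lin (a k) (b k))]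
      exact Submodule.smul_mem _ _ hk_mem
    | succ m =>
      have hg : 𝔇 (lin (b k) (-(a k))) f ∈
          Submodule.span ℝ ((fun i => lin (a i) (b i) ^ m) '' s) := by
        refine ih (hf.diffOpAlgHom_lin _ _) ?_
        rw [diffOpAlgHom_comm, ← Module.End.mul_apply, ← map_mul]
        rwa [Finset.prod_insert hk] at h
      obtain ⟨g, hg_mem, hg_eq⟩ := span_lin_pow_le_map_diffOpAlgHom a b
        (fun i hi => hprop i k (ne_of_mem_of_not_mem hi hk)) m hg
      have hg_hom : g.IsHomogeneous (m + 1) := by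
        refine (mem_homogeneousSubmodule _ _).mp (Submodule.span_le.mpr ?_ hg_mem)
        rintro _ ⟨i, -, rfl⟩
        exact lin_pow_isHomogeneous _ _ _
      obtain ⟨c, hc⟩ := exists_eq_smul_lin_pow_of_diffOpAlgHom_eq_zero (hnz k) (hf.sub hg_hom)
        (by rw [map_sub, hg_eq, sub_self])
      rw [← sub_add_cancel f g, hc]
      exact add_mem (Submodule.smul_mem _ _ hk_mem)
        (Submodule.span_mono (Set.subset_insert _ _) hg_mem)

theorem diffOpAlgHom_prod_lin_pow_eq_zero [Fintype ι] (n : ℕ) (j : ι) :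
    𝔇 (∏ i, lin (b i) (-(a i))) (lin (a j) (b j) ^ n) = 0 := by
  classical
  rw [← Finset.prod_erase_mul _ _ (Finset.mem_univ j), map_mul, Module.End.mul_apply,
    diffOpAlgHom_lin_lin_pow, mul_comm (a j), mul_neg, add_neg_cancel, mul_zero, zero_smul,
    map_zero]

end LinearFormPowers

theorem stmt_0_general (d r : ℕ) (f : MvPolynomial (Fin 2) ℝ)
    (hf : f.IsHomogeneous d)
    (a b : Fin r → ℝ) (hnz : ∀ i, (a i, b i) ≠ (0, 0))
    (hprop : ∀ i j, i ≠ j → a i * b j ≠ a j * b i) :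
    (∃ c : Fin r → ℝ, f = ∑ i, c i • (lin (a i) (b i)) ^ d) ↔
      diffOp (∏ i, lin (b i) (-(a i))) f = 0 := by
  rw [← diffOpAlgHom_apply]
  constructor
  · rintro ⟨c, rfl⟩
    simp only [map_sum, map_smul, diffOpAlgHom_prod_lin_pow_eq_zero, smul_zero,
      Finset.sum_const_zero]
  · intro h
    have hspan := mem_span_lin_pow_of_diffOpAlgHom_prod_eq_zero a b hnz hprop Finset.univ hf h
    rw [Finset.coe_univ, Set.image_univ] at hspan
    obtain ⟨c, hc⟩ := (Submodule.mem_span_range_iff_exists_fun ℝ).mp hspan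
    exact ⟨c, hc.symm⟩

/-- Apolarity Lemma for binary forms: f = Σ cᵢ (aᵢx+bᵢy)^d with pairwise
non-proportional linear forms iff p = Π (bᵢx - aᵢy) annihilates f. -/
theorem stmt_0 (d r : ℕ) (hd : 1 ≤ d) (f : MvPolynomial (Fin 2) ℝ)
    (hf : f.IsHomogeneous d)
    (a b : Fin r → ℝ) (hnz : ∀ i, (a i, b i) ≠ (0, 0))
    (hprop : ∀ i j, i ≠ j → a i * b j ≠ a j * b i) :
    (∃ c : Fin r → ℝ, f = ∑ i, c i • (lin (a i) (b i)) ^ d) ↔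
      diffOp (∏ i, lin (b i) (-(a i))) f = 0 :=
  stmt_0_general d r f hf a b hnz hprop
end

section
/- Every real binary form f of degree d ≥ 1 has real Waring rank at most d: there exist real numbers c_1,…,c_d and real linear forms ℓ_1,…,ℓ_d such that f = Σ_{i=1}^d c_i ℓ_i^d. -/
/-!
Dehomogenize: `f = p.homogenize d` with `p = f(X, 1)`. The coefficient of `X ^ k` in
`(X + r) ^ d` is `d.choose k * r ^ (d - k)`, so `f = ∑ cᵢ (x + rᵢ y) ^ d` exactly when the
functional `L` with `L (X ^ j) = p.coeff (d - j) / d.choose (d - j)` agrees on polynomials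
of degree `≤ d` with the quadrature rule `q ↦ ∑ cᵢ q(rᵢ)`. By Lagrange interpolation such a
rule with `d` distinct nodes exists as soon as `L` kills the nodal polynomial `∏ (X - rᵢ)`.

To find the nodes, fix `d - 1` distinct nodes `ρⱼ` with nodal polynomial `q`; if `L q ≠ 0`, then
`L` kills `(X - t) q` for `t = L (X q) / L q`, and `t` is a new node unless `L ((X - ρⱼ) q) = 0`.
Taking `ρⱼ = -(j + 1) s`, each of these quantities is a polynomial in `s` whose coefficients are
those of a product of factors `X + a` with `a > 0`, weighted by the moments `L (X ^ k)`; it is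
nonzero as soon as some moment `L (X ^ k)`, `k < d`, is, so a generic `s > 0` works. If all these
moments vanish, `f` is a multiple of `y ^ d`.
-/

open MvPolynomial

open Finset

namespace Polynomial

lemma coeff_prod_X_add_C_pos {R ι : Type*} [CommSemiring R] [PartialOrder R]
    [IsStrictOrderedRing R] (s : Finset ι) {a : ι → R} (ha : ∀ i ∈ s, 0 < a i)
    {k : ℕ} (hk : k ≤ #s) : 0 < (∏ i ∈ s, (X + C (a i))).coeff k := by
  rw [Finset.prod_X_add_C_coeff s a hk]
  refine Finset.sum_pos (fun t ht => Finset.prod_pos fun i hi => ?_)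
    (Finset.powersetCard_nonempty.2 (Nat.sub_le _ _))
  exact ha i ((Finset.mem_powersetCard.1 ht).1 hi)

variable {K : Type*} [Field K]

lemma prod_X_add_C_scaleRoots {ι : Type*} (s : Finset ι) (a : ι → K) (t : K) :
    (∏ i ∈ s, (X + C (a i))).scaleRoots t = ∏ i ∈ s, (X + C (a i * t)) := by
  classical
  induction s using Finset.induction_on with
  | empty => simp
  | insert j s hj ih =>
    rw [prod_insert hj, prod_insert hj, mul_scaleRoots_of_noZeroDivisors, ih, X_add_C_scaleRoots]

lemma linearMap_eq_sum_coeff_mul (L : K[X] →ₗ[K] K) (p : K[X]) :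
    L p = ∑ k ∈ range (p.natDegree + 1), p.coeff k * L (X ^ k) := by
  conv_lhs => rw [p.as_sum_range]
  simp only [map_sum, ← smul_X_eq_monomial, map_smul, smul_eq_mul]

lemma finite_setOf_linearMap_scaleRoots_eq_zero [Infinite K] (L : K[X] →ₗ[K] K) {Q : K[X]}
    (hQ : ∃ k, Q.coeff k * L (X ^ k) ≠ 0) : {t | L (Q.scaleRoots t) = 0}.Finite := by
  obtain ⟨k₀, hk₀⟩ := hQ
  have hk₀Q : k₀ ≤ Q.natDegree := le_natDegree_of_ne_zero (left_ne_zero_of_mul hk₀)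
  set N := Q.natDegree
  let P : K[X] := ∑ k ∈ range (N + 1), C (Q.coeff k * L (X ^ k)) * X ^ (N - k)
  have hPcoeff : P.coeff (N - k₀) = Q.coeff k₀ * L (X ^ k₀) := by
    rw [finsetSum_coeff, sum_eq_single k₀]
    · rw [coeff_C_mul_X_pow, if_pos rfl]
    · intro k hk hne
      rw [coeff_C_mul_X_pow, if_neg]
      have := mem_range.1 hk
      omega
    · exact fun h => absurd (mem_range.2 (Nat.lt_succ_of_le hk₀Q)) h
  have hP : P ≠ 0 := fun h => hk₀ (by rw [← hPcoeff, h, coeff_zero])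
  refine (P.finite_setOfPred_isRoot hP).subset fun t ht => ?_
  rw [Set.mem_ofPred_eq, linearMap_eq_sum_coeff_mul, natDegree_scaleRoots] at ht
  simp only [Set.mem_ofPred_eq, IsRoot, P, eval_finsetSum, eval_mul, eval_C, eval_pow, eval_X]
  rw [← ht]
  exact sum_congr rfl fun k _ => by rw [coeff_scaleRoots]; ring

lemma exists_pos_forall_linearMap_scaleRoots_ne_zero [LinearOrder K] [IsStrictOrderedRing K]
    (L : K[X] →ₗ[K] K) (S : Finset K[X])
    (hS : ∀ Q ∈ S, ∃ k, Q.coeff k * L (X ^ k) ≠ 0) :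
    ∃ t > 0, ∀ Q ∈ S, L (Q.scaleRoots t) ≠ 0 := by
  have hbad : (⋃ Q ∈ S, {t | L (Q.scaleRoots t) = 0}).Finite :=
    S.finite_toSet.biUnion fun Q hQ => finite_setOf_linearMap_scaleRoots_eq_zero L (hS Q hQ)
  obtain ⟨t, ht, htbad⟩ := ((Set.Ioi_infinite (0 : K)).sdiff hbad).nonempty
  simp only [Set.mem_iUnion, Set.mem_ofPred_eq, not_exists] at htbad
  exact ⟨t, ht, fun Q hQ => htbad Q hQ⟩

open Lagrange Function

lemma exists_injective_linearMap_nodal_eq_zero_of_ne_zero {n : ℕ} (L : K[X] →ₗ[K] K)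
    {ρ : Fin n → K} (hρ : Injective ρ) (hq : L (nodal univ ρ) ≠ 0)
    (hρq : ∀ i, L ((X - C (ρ i)) * nodal univ ρ) ≠ 0) :
    ∃ r : Fin (n + 1) → K, Injective r ∧ L (nodal univ r) = 0 := by
  set q := nodal univ ρ
  set t := L (X * q) / L q
  have ht : L ((X - C t) * q) = 0 := by
    rw [sub_mul, map_sub, ← smul_eq_C_mul, map_smul, smul_eq_mul, div_mul_cancel₀ _ hq,
      sub_self]
  refine ⟨Fin.cons t ρ, Fin.cons_injective_iff.2 ⟨?_, hρ⟩, ?_⟩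
  · rintro ⟨i, hi⟩
    exact hρq i (hi ▸ ht)
  · rwa [nodal_eq, Fin.prod_univ_succ, Fin.cons_zero]

theorem exists_injective_linearMap_nodal_eq_zero [LinearOrder K] [IsStrictOrderedRing K]
    (L : K[X] →ₗ[K] K) {n k : ℕ} (hk : k ≤ n) (hL : L (X ^ k) ≠ 0) :
    ∃ r : Fin (n + 1) → K, Injective r ∧ L (nodal univ r) = 0 := by
  classical
  let a : Fin n → K := fun j => j + 1
  have ha : ∀ j, 0 < a j := fun j => by positivity
  let Q₀ : K[X] := ∏ j, (X + C (a j))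
  let Q : Fin n → K[X] := fun i => ∏ j, (X + C ((Fin.cons (a i) a : Fin (n + 1) → K) j))
  have hQ : ∀ P ∈ insert Q₀ (univ.image Q), ∃ k, P.coeff k * L (X ^ k) ≠ 0 := by
    simp only [mem_insert, mem_image, mem_univ, true_and]
    rintro P (rfl | ⟨i, rfl⟩) <;> refine ⟨k, mul_ne_zero (ne_of_gt ?_) hL⟩
    · exact coeff_prod_X_add_C_pos _ (fun j _ => ha j) (by simpa using hk)
    · refine coeff_prod_X_add_C_pos _ (fun j _ => ?_) (by simp; omega)
      cases j using Fin.cases <;> simp [ha]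
  obtain ⟨t, ht, hne⟩ := exists_pos_forall_linearMap_scaleRoots_ne_zero L _ hQ
  let ρ : Fin n → K := fun j => -(a j * t)
  have hnodal : Q₀.scaleRoots t = nodal univ ρ := by
    simp only [Q₀, ρ, prod_X_add_C_scaleRoots, nodal_eq, C_neg, sub_neg_eq_add]
  refine exists_injective_linearMap_nodal_eq_zero_of_ne_zero L (fun i j hij => ?_)
    (hnodal ▸ hne Q₀ (mem_insert_self _ _)) fun i => ?_
  · simp only [ρ, a, neg_inj, mul_eq_mul_right_iff, ht.ne', or_false, add_left_inj,
      Nat.cast_inj] at hij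
    exact Fin.ext hij
  · convert hne (Q i) (mem_insert_of_mem (mem_image_of_mem Q (mem_univ i))) using 2
    rw [← hnodal, prod_X_add_C_scaleRoots, prod_X_add_C_scaleRoots, Fin.prod_univ_succ]
    simp only [Fin.cons_zero, Fin.cons_succ, ρ, C_neg, sub_neg_eq_add]

theorem exists_weights_linearMap_eq_sum_mul_eval {n : ℕ} (L : K[X] →ₗ[K] K) {r : Fin n → K}
    (hr : Injective r) (hN : L (nodal univ r) = 0) :
    ∃ c : Fin n → K, ∀ p : K[X], p.natDegree ≤ n → L p = ∑ j, c j * p.eval (r j) := by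
  set N := nodal univ r
  have hNmonic : N.Monic := nodal_monic
  have hNdeg : N.natDegree = n := by rw [natDegree_nodal, card_univ, Fintype.card_fin]
  refine ⟨fun j => L (Lagrange.basis univ r j), fun p hp => ?_⟩
  have hdiv : p /ₘ N = C ((p /ₘ N).coeff 0) :=
    eq_C_of_natDegree_eq_zero (by rw [natDegree_divByMonic p hNmonic, hNdeg]; omega)
  have hmod : p %ₘ N = ∑ j, C ((p %ₘ N).eval (r j)) * Lagrange.basis univ r j := by
    rw [← interpolate_apply]
    refine eq_interpolate hr.injOn ?_
    rw [card_univ, Fintype.card_fin, ← hNdeg, ← degree_eq_natDegree (nodal_ne_zero)]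
    exact degree_modByMonic_lt p hNmonic
  have heval : ∀ j, (p %ₘ N).eval (r j) = p.eval (r j) := fun j => by
    conv_rhs => rw [← modByMonic_add_div p N]
    rw [eval_add, eval_mul, eval_nodal_at_node (mem_univ j), zero_mul, add_zero]
  calc L p = L (p %ₘ N) + (p /ₘ N).coeff 0 * L N := by
        conv_lhs => rw [← modByMonic_add_div p N, hdiv]
        rw [map_add, mul_comm, ← smul_eq_C_mul, map_smul, smul_eq_mul]
    _ = ∑ j, L (Lagrange.basis univ r j) * p.eval (r j) := by
        rw [hN, mul_zero, add_zero, hmod, map_sum]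
        exact sum_congr rfl fun j _ => by
          rw [← smul_eq_C_mul, map_smul, smul_eq_mul, heval, mul_comm]

lemma homogenize_congr {R : Type*} [CommSemiring R] {p q : R[X]} {n : ℕ}
    (h : ∀ k ≤ n, p.coeff k = q.coeff k) : p.homogenize n = q.homogenize n :=
  sum_congr rfl fun kl hkl => by
    rw [h kl.1 (by have := mem_antidiagonal.1 hkl; omega)]

/-- For `p = (X + C r) ^ d` this functional is evaluation at `r` on polynomials of degree
at most `d`, since the coefficient of `X ^ (d - j)` in `p` is `d.choose (d - j) * r ^ j`. -/
noncomputable def momentFunctional (d : ℕ) (p : K[X]) : K[X] →ₗ[K] K :=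
  ∑ j ∈ range (d + 1), (p.coeff (d - j) / d.choose (d - j)) • lcoeff K j

lemma momentFunctional_X_pow {d j : ℕ} (p : K[X]) (hj : j ≤ d) :
    momentFunctional d p (X ^ j) = p.coeff (d - j) / d.choose (d - j) := by
  simp [momentFunctional, coeff_X_pow, Nat.lt_succ_of_le hj]

lemma coeff_eq_mul_momentFunctional [CharZero K] {d k : ℕ} (p : K[X]) (hk : k ≤ d) :
    p.coeff k = d.choose k * momentFunctional d p (X ^ (d - k)) := by
  rw [momentFunctional_X_pow p (Nat.sub_le d k), Nat.sub_sub_self hk,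
    mul_div_cancel₀ _ (Nat.cast_ne_zero.2 (Nat.choose_pos hk).ne')]

lemma coeff_eq_coeff_sum_smul_X_add_C_pow [CharZero K] {n d : ℕ} {p : K[X]} {c r : Fin n → K}
    (h : ∀ j ≤ d, momentFunctional d p (X ^ j) = ∑ i, c i * r i ^ j) {k : ℕ}
    (hk : k ≤ d) :
    p.coeff k = (∑ i, c i • (X + C (r i)) ^ d).coeff k := by
  rw [coeff_eq_mul_momentFunctional p hk, h _ (Nat.sub_le d k), finsetSum_coeff, mul_sum]
  exact sum_congr rfl fun i _ => by rw [coeff_smul, coeff_X_add_C_pow, smul_eq_mul]; ring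

lemma coeff_eq_coeff_C_of_momentFunctional_eq_zero [CharZero K] {d : ℕ} {p : K[X]}
    (h : ∀ j < d, momentFunctional d p (X ^ j) = 0) {k : ℕ} (hk : k ≤ d) :
    p.coeff k = (C (p.coeff 0)).coeff k := by
  rcases Nat.eq_zero_or_pos k with rfl | hk0
  · rw [coeff_C_zero]
  · rw [coeff_eq_mul_momentFunctional p hk, h _ (by omega), mul_zero, coeff_C_of_ne_zero hk0.ne']

end Polynomial

lemma isHomogeneous_lin (a b : ℝ) : (lin a b).IsHomogeneous 1 := by
  simp only [lin, MvPolynomial.smul_eq_C_mul]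
  exact (isHomogeneous_C_mul_X a 0).add (isHomogeneous_C_mul_X b 1)

lemma aeval_lin (a b : ℝ) :
    MvPolynomial.aeval ![Polynomial.X, 1] (lin a b) =
      Polynomial.C a * Polynomial.X + Polynomial.C b := by
  simp [lin, Polynomial.smul_eq_C_mul]

lemma homogenize_sum_smul_X_add_C_pow {n : ℕ} (d : ℕ) (c r : Fin n → ℝ) :
    (∑ i, c i • (Polynomial.X + Polynomial.C (r i)) ^ d).homogenize d =
      ∑ i, c i • lin 1 (r i) ^ d := by
  refine Polynomial.homogenize_eq_of_isHomogeneous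
    (IsHomogeneous.sum _ _ _ fun i _ => ?_) ?_
  · rw [MvPolynomial.smul_eq_C_mul]
    simpa using ((isHomogeneous_lin 1 (r i)).pow d).C_mul (c i)
  · simp [aeval_lin]

lemma hasWaringDecomp_C_mul_X_one_pow {d r : ℕ} (hr : 0 < r) (α : ℝ) :
    hasWaringDecomp d r (MvPolynomial.C α * X 1 ^ d) := by
  refine ⟨Pi.single ⟨0, hr⟩ α, 0, 1, ?_⟩
  have hlin : lin 0 1 = X 1 := by simp [lin]
  simp only [Pi.zero_apply, Pi.one_apply, hlin, MvPolynomial.smul_eq_C_mul]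
  rw [← Finset.sum_mul, ← map_sum, Finset.sum_pi_single', if_pos (mem_univ _)]

/-- Every real binary form of degree d ≥ 1 has real Waring rank at most d. -/
theorem stmt_3 (d : ℕ) (hd : 1 ≤ d) (f : MvPolynomial (Fin 2) ℝ)
    (hf : f.IsHomogeneous d) : hasWaringDecomp d d f := by
  set p : Polynomial ℝ := MvPolynomial.aeval ![Polynomial.X, 1] f
  have hfp : p.homogenize d = f := Polynomial.homogenize_eq_of_isHomogeneous hf rfl
  obtain ⟨n, rfl⟩ := Nat.exists_eq_add_of_le' hd
  by_cases hL : ∃ j ≤ n, Polynomial.momentFunctional (n + 1) p (Polynomial.X ^ j) ≠ 0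
  · obtain ⟨j, hj, hLj⟩ := hL
    obtain ⟨r, hr, hN⟩ := Polynomial.exists_injective_linearMap_nodal_eq_zero _ hj hLj
    obtain ⟨c, hc⟩ := Polynomial.exists_weights_linearMap_eq_sum_mul_eval _ hr hN
    refine ⟨c, fun _ => 1, r, ?_⟩
    rw [← hfp, ← homogenize_sum_smul_X_add_C_pow]
    refine Polynomial.homogenize_congr fun k hk =>
      Polynomial.coeff_eq_coeff_sum_smul_X_add_C_pow (fun j hj => ?_) hk
    simpa using hc (Polynomial.X ^ j) (by simpa using hj)
  · push Not at hL
    rw [← hfp, Polynomial.homogenize_congr fun k hk =>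
      Polynomial.coeff_eq_coeff_C_of_momentFunctional_eq_zero (fun j hj => hL j (by omega)) hk,
      Polynomial.homogenize_C]
    exact hasWaringDecomp_C_mul_X_one_pow (by omega) _
end

section
/- For every d ≥ 1 and every integer m with 1 ≤ m ≤ d, there exists a real binary form f of degree d whose real Waring rank is exactly m. -/
/-!
Any `m` terms of a `d`-term decomposition of `x y^(d-1)` add up to a form of real rank exactly
`m`, because `x y^(d-1)` has no decomposition with fewer than `d` terms: a shorter decomposition
of those `m` terms, together with the remaining `d - m`, would be one.

For the lower bound, comparing coefficients in `x y^(d-1) = ∑ cᵢ (aᵢ x + bᵢ y)^d` shows that the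
weights `cᵢ aᵢ^d` at the points `bᵢ / aᵢ` (over `aᵢ ≠ 0`) have vanishing moments of every order
`< d - 1` but not of order `d - 1`. The moments of `r` atoms `tᵢ` obey the linear recurrence of
order `r` with characteristic polynomial `∏ (X - tᵢ)`, so `r < d` is impossible.

For the decomposition, take `d` distinct nodes `tⱼ` with `∑ tⱼ = 0` and (Vandermonde) weights with
moments `δ_{n, d-1} / d` for `n < d`. The recurrence makes the moment of order `d` equal to
`(∑ tⱼ) / d = 0`, and these moments are exactly the coefficients of `∑ cⱼ (x + tⱼ y)^d`.
-/

open MvPolynomial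

open Finset

theorem coeff_toForm (d : ℕ) (v : Fin (d + 1) → ℝ) (k : Fin (d + 1)) :
    coeff (Finsupp.single 0 (k : ℕ) + Finsupp.single 1 (d - k)) (toForm d v) = v k := by
  simp only [toForm, coeff_sum, coeff_smul, X_pow_eq_monomial, monomial_mul,
    coeff_monomial, smul_eq_mul, mul_ite, mul_one, mul_zero]
  rw [sum_eq_single k (fun i _ hik => if_neg fun h => hik ?_) (by simp), if_pos rfl]
  exact Fin.ext (by simpa using congrArg (· 0) h)

theorem toForm_injective (d : ℕ) : Function.Injective (toForm d) := fun v w h =>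
  funext fun k => by rw [← coeff_toForm d v k, h, coeff_toForm]

theorem toForm_isHomogeneous (d : ℕ) (v : Fin (d + 1) → ℝ) : (toForm d v).IsHomogeneous d :=
  IsHomogeneous.sum _ _ _ fun i _ => by
    simpa [smul_eq_C_mul, Nat.add_sub_cancel' (Nat.lt_succ_iff.mp i.2)] using
      ((isHomogeneous_X_pow (0 : Fin 2) (i : ℕ)).mul
        (isHomogeneous_X_pow (1 : Fin 2) (d - i))).C_mul (v i)

theorem lin_pow (a b : ℝ) (d : ℕ) :
    lin a b ^ d = toForm d fun k => d.choose k * a ^ (k : ℕ) * b ^ (d - k) := by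
  rw [lin, add_pow, ← Fin.sum_univ_eq_sum_range]
  refine sum_congr rfl fun k _ => ?_
  simp only [smul_eq_C_mul, mul_pow, ← map_pow, map_mul, map_natCast]
  ring

theorem sum_smul_lin_pow {ι : Type*} [Fintype ι] (d : ℕ) (c a b : ι → ℝ) :
    ∑ i, c i • lin (a i) (b i) ^ d =
      toForm d fun k => d.choose k * ∑ i, c i * a i ^ (k : ℕ) * b i ^ (d - k) := by
  simp only [lin_pow, toForm, smul_sum, smul_smul]
  rw [sum_comm]
  refine sum_congr rfl fun k _ => ?_
  rw [← sum_smul, mul_sum]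
  congr 1
  exact sum_congr rfl fun i _ => by ring

theorem X_mul_X_pow_eq_toForm {d : ℕ} (hd : 1 ≤ d) :
    (X 0 * X 1 ^ (d - 1) : MvPolynomial (Fin 2) ℝ) =
      toForm d fun k => if (k : ℕ) = 1 then 1 else 0 := by
  rw [toForm, sum_eq_single_of_mem ⟨1, by omega⟩ (mem_univ _)]
  · simp
  · exact fun k _ hk => by rw [if_neg fun h => hk (Fin.ext h), zero_smul]

theorem Finset.sum_mul_pow_add_card {R ι : Type*} [CommRing R] [Nontrivial R] (s : Finset ι)
    (w t : ι → R) (k : ℕ) :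
    ∑ i ∈ s, w i * t i ^ (k + #s) =
      -∑ l ∈ range #s, (∏ i ∈ s, (Polynomial.X - Polynomial.C (t i))).coeff l *
        ∑ i ∈ s, w i * t i ^ (k + l) := by
  set Q := ∏ i ∈ s, (Polynomial.X - Polynomial.C (t i))
  have hQ : Q.natDegree = #s := Polynomial.natDegree_finsetProd_X_sub_C_eq_card s t
  have hroot (i) (hi : i ∈ s) :
      t i ^ #s + ∑ l ∈ range #s, Q.coeff l * t i ^ l = 0 := by
    have h := congrArg (Polynomial.eval (t i)) (Polynomial.monic_prod_X_sub_C t s).as_sum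
    rw [Polynomial.eval_prod, prod_eq_zero hi (by simp), hQ] at h
    simpa [Polynomial.eval_finsetSum] using h.symm
  simp only [mul_sum]
  rw [eq_neg_iff_add_eq_zero, sum_comm, ← sum_add_distrib]
  refine sum_eq_zero fun i hi => ?_
  calc _ = w i * t i ^ k * (t i ^ #s + ∑ l ∈ range #s, Q.coeff l * t i ^ l) := by
        rw [mul_add, mul_sum, pow_add, ← mul_assoc]
        exact congrArg _ (sum_congr rfl fun l _ => by ring)
    _ = 0 := by rw [hroot i hi, mul_zero]

theorem Finset.sum_mul_pow_eq_zero {R ι : Type*} [CommRing R] [Nontrivial R] (s : Finset ι)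
    (w t : ι → R) {N : ℕ} (hN : #s ≤ N) (h : ∀ n < N, ∑ i ∈ s, w i * t i ^ n = 0) :
    ∑ i ∈ s, w i * t i ^ N = 0 := by
  obtain ⟨k, rfl⟩ := Nat.exists_eq_add_of_le' hN
  rw [sum_mul_pow_add_card, sum_eq_zero fun l hl => by rw [h _ (by simp at hl; omega), mul_zero],
    neg_zero]

theorem exists_sum_mul_pow_eq {K : Type*} [Field K] {n : ℕ} {t : Fin n → K}
    (ht : Function.Injective t) (v : Fin n → K) :
    ∃ c : Fin n → K, ∀ k : Fin n, ∑ j, c j * t j ^ (k : ℕ) = v k := by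
  obtain ⟨c, hc⟩ := Matrix.vecMul_surjective_iff_isUnit.mpr
    (Matrix.isUnit_iff_isUnit_det _ |>.mpr (Matrix.det_vandermonde_ne_zero_iff.mpr ht).isUnit) v
  exact ⟨c, fun k => by simpa [Matrix.vecMul, dotProduct] using congrFun hc k⟩

theorem hasWaringDecomp.add {d r s : ℕ} {f g : MvPolynomial (Fin 2) ℝ}
    (hf : hasWaringDecomp d r f) (hg : hasWaringDecomp d s g) :
    hasWaringDecomp d (r + s) (f + g) := by
  obtain ⟨c, a, b, rfl⟩ := hf
  obtain ⟨c', a', b', rfl⟩ := hg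
  refine ⟨Fin.append c c', Fin.append a a', Fin.append b b', ?_⟩
  simp [Fin.sum_univ_add]

theorem hasWaringDecomp_sum {ι : Type*} (d : ℕ) (s : Finset ι) (c a b : ι → ℝ) :
    hasWaringDecomp d #s (∑ i ∈ s, c i • lin (a i) (b i) ^ d) := by
  let e := s.equivFin.symm
  refine ⟨fun j => c (e j), fun j => a (e j), fun j => b (e j), ?_⟩
  rw [← sum_coe_sort s, ← e.sum_comp]

theorem waringRank_eq {d m : ℕ} {f : MvPolynomial (Fin 2) ℝ} (hf : hasWaringDecomp d m f)
    (hlt : ∀ r < m, ¬ hasWaringDecomp d r f) : waringRank d f = m :=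
  le_antisymm (Nat.sInf_le hf) (le_csInf ⟨m, hf⟩ fun r hr => not_lt.mp fun h => hlt r h hr)

theorem waringRank_zero (d : ℕ) : waringRank d 0 = 0 :=
  Nat.sInf_eq_zero.mpr (Or.inl ⟨Fin.elim0, Fin.elim0, Fin.elim0, by simp⟩)

theorem waringRank_eq_of_add {d m n : ℕ} {f g : MvPolynomial (Fin 2) ℝ}
    (hf : hasWaringDecomp d m f) (hg : hasWaringDecomp d n g)
    (hfg : ∀ r < m + n, ¬ hasWaringDecomp d r (f + g)) : waringRank d f = m :=
  waringRank_eq hf fun r hr hf' => hfg (r + n) (by omega) (hf'.add hg)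

theorem not_hasWaringDecomp_X_mul_X_pow {d r : ℕ} (hr : r < d) :
    ¬ hasWaringDecomp d r (X 0 * X 1 ^ (d - 1)) := by
  rintro ⟨c, a, b, h⟩
  rw [X_mul_X_pow_eq_toForm (by omega), sum_smul_lin_pow] at h
  have hcoeff (n : ℕ) (hn : n < d) :
      (if d - n = 1 then 1 else 0 : ℝ) =
        d.choose (d - n) * ∑ i, c i * a i ^ (d - n) * b i ^ n := by
    simpa [Nat.sub_sub_self hn.le] using congrFun (toForm_injective d h) ⟨d - n, by omega⟩
  let F := univ.filter (a · ≠ 0)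
  have hmoment (n : ℕ) (hn : n < d) :
      ∑ i ∈ F, c i * a i ^ d * (b i / a i) ^ n = ∑ i, c i * a i ^ (d - n) * b i ^ n := by
    rw [sum_filter]
    refine sum_congr rfl fun i _ => ?_
    split_ifs with hai
    · rw [div_pow, ← Nat.sub_add_cancel hn.le, pow_add, Nat.add_sub_cancel]
      field_simp
    · simp [not_not.mp hai, Nat.sub_ne_zero_of_lt hn]
  have hcard : #F ≤ d - 1 :=
    (card_filter_le _ _).trans (by simpa using Nat.le_sub_one_of_lt hr)
  have hvanish : ∑ i ∈ F, c i * a i ^ d * (b i / a i) ^ (d - 1) = 0 :=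
    sum_mul_pow_eq_zero F _ _ hcard fun n hn => by
      have := hcoeff n (by omega)
      rw [if_neg (by omega)] at this
      rw [hmoment n (by omega)]
      exact (mul_eq_zero.mp this.symm).resolve_left
        (Nat.cast_ne_zero.mpr (Nat.choose_pos (by omega)).ne')
  have := hcoeff (d - 1) (by omega)
  rw [if_pos (by omega), ← hmoment (d - 1) (by omega), hvanish, mul_zero] at this
  exact one_ne_zero this

theorem exists_X_mul_X_pow_eq_sum {d : ℕ} (hd : 1 ≤ d) :
    ∃ c t : Fin d → ℝ, X 0 * X 1 ^ (d - 1) = ∑ j, c j • lin 1 (t j) ^ d := by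
  let t : Fin d → ℝ := fun j => 2 * j - (d - 1)
  have ht : Function.Injective t := fun i j h => Fin.ext (by simpa [t] using h)
  have hsum : ∑ j, t j = 0 := by
    have := congrArg (Nat.cast : ℕ → ℝ) (Finset.sum_range_id_mul_two d)
    push_cast [Nat.cast_sub hd] at this
    rw [← Fin.sum_univ_eq_sum_range (fun i => (i : ℝ))] at this
    simp only [t, sum_sub_distrib, ← mul_sum, sum_const, card_univ, Fintype.card_fin,
      nsmul_eq_mul]
    linarith
  obtain ⟨c, hc⟩ :=
    exists_sum_mul_pow_eq ht fun k => if (k : ℕ) = d - 1 then (d : ℝ)⁻¹ else 0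
  have hmoment (n : ℕ) (hn : n < d) :
      ∑ j, c j * t j ^ n = if n = d - 1 then (d : ℝ)⁻¹ else 0 := hc ⟨n, hn⟩
  have htop : ∑ j, c j * t j ^ d = 0 := by
    have := Finset.sum_mul_pow_add_card univ c t 0
    simp only [card_univ, Fintype.card_fin, zero_add] at this
    have hcoeff :=
      Polynomial.prod_X_sub_C_coeff_card_pred univ t (card_pos.mpr ⟨⟨0, hd⟩, mem_univ _⟩)
    rw [card_univ, Fintype.card_fin, hsum, neg_zero] at hcoeff
    rw [this, sum_eq_single (d - 1), hcoeff, zero_mul, neg_zero]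
    · intro l hl hne
      rw [hmoment l (by simpa using hl), if_neg hne, mul_zero]
    · exact fun h => absurd (mem_range.mpr (by omega)) h
  refine ⟨c, t, ?_⟩
  rw [X_mul_X_pow_eq_toForm hd, sum_smul_lin_pow]
  congr 1
  funext k
  simp only [one_pow, mul_one]
  rcases Nat.eq_zero_or_pos k with hk | hk
  · rw [hk, Nat.sub_zero, htop]
    simp
  · rw [hmoment (d - k) (by omega)]
    by_cases hk1 : (k : ℕ) = 1
    · rw [if_pos hk1, if_pos (by omega), hk1, Nat.choose_one_right]
      field_simp
    · rw [if_neg hk1, if_neg (by omega), mul_zero]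

theorem stmt_4_general (d m : ℕ) (hm1 : 1 ≤ m) (hmd : m ≤ d) :
    ∃ f : MvPolynomial (Fin 2) ℝ, f ≠ 0 ∧ f.IsHomogeneous d ∧
      waringRank d f = m := by
  obtain ⟨c, t, hxy⟩ := exists_X_mul_X_pow_eq_sum (hm1.trans hmd)
  obtain ⟨s, -, hs⟩ := exists_subset_card_eq (show m ≤ #(univ : Finset (Fin d)) by simpa)
  have hrank : waringRank d (∑ j ∈ s, c j • lin 1 (t j) ^ d) = m := by
    refine waringRank_eq_of_add (hs ▸ hasWaringDecomp_sum d s c (fun _ => 1) t)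
      (hasWaringDecomp_sum d sᶜ c (fun _ => 1) t) fun r hr => ?_
    rw [sum_add_sum_compl, ← hxy]
    exact not_hasWaringDecomp_X_mul_X_pow (by rw [card_compl, Fintype.card_fin] at hr; omega)
  refine ⟨_, fun h0 => ?_, IsHomogeneous.sum _ _ _ fun j _ => ?_, hrank⟩
  · rw [h0, waringRank_zero] at hrank
    omega
  · rw [lin_pow, smul_eq_C_mul]
    exact (toForm_isHomogeneous d _).C_mul _

/-- For every d ≥ 1 and 1 ≤ m ≤ d there is a real binary form of degree d
whose real Waring rank is exactly m. -/
theorem stmt_4 (d m : ℕ) (hd : 1 ≤ d) (hm1 : 1 ≤ m) (hmd : m ≤ d) :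
    ∃ f : MvPolynomial (Fin 2) ℝ, f ≠ 0 ∧ f.IsHomogeneous d ∧
      waringRank d f = m :=
  stmt_4_general d m hm1 hmd
end

section
/- Let f ∈ ℝ[x,y]_d be a nonzero binary form. Then the real Waring rank of f equals the least integer m such that the degree-m graded piece (f^⊥)_m of the apolar ideal contains a nonzero form all of whose roots (in ℙ^1) are real and distinct, i.e., a form that factors as a product of m pairwise non-proportional real linear forms. -/
/-! Sylvester's apolarity argument. The action `h ↦ h(∂₀, ∂₁)` of polynomials on forms is an
algebra homomorphism, and `ℓ = a x + b y` sends `(α x + β y) ^ n` to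
`n (a α + b β) (α x + β y) ^ (n - 1)`. Hence `ℓ` kills `(ℓ^⊥) ^ n`, where `ℓ^⊥ = b x - a y`, and by
Euler's identity these are the only forms of degree `n` it kills. Peeling off one factor at a
time, a product of pairwise non-proportional real linear forms `ℓ_i` annihilates a form `f` of
degree `d` iff `f` is a combination of the `(ℓ_i^⊥) ^ d`. Conversely, a Waring decomposition of
length `r` yields such a product with at most `r` factors, after dropping zero forms and keeping
one form from each proportionality class. Any `d + 1` distinct factors annihilate `f`, so the
infimum on the right is attained. -/

open MvPolynomial

lemma commute_pderiv {σ R : Type*} [CommRing R] (i j : σ) :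
    Commute (pderiv i).toLinearMap (pderiv j : Derivation R (MvPolynomial σ R) _).toLinearMap := by
  have : ⁅pderiv i, (pderiv j : Derivation R (MvPolynomial σ R) _)⁆ = 0 :=
    derivation_ext fun k => by
      classical
      rw [Derivation.commutator_apply, pderiv_X, pderiv_X]
      simp [Pi.single_apply, apply_ite]
  rw [commute_iff_lie_eq, ← Derivation.commutator_coe_linear_map, this]
  rfl

lemma MvPolynomial.IsHomogeneous.eq_C_coeff_zero_s5 {σ R : Type*} [CommSemiring R]
    {f : MvPolynomial σ R} (hf : f.IsHomogeneous 0) : f = C (coeff 0 f) :=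
  totalDegree_eq_zero_iff_eq_C.mp ((totalDegree_zero_iff_isHomogeneous _).mpr hf)

noncomputable def pderivMonoidHom :
    Multiplicative (Fin 2 →₀ ℕ) →* Module.End ℝ (MvPolynomial (Fin 2) ℝ) where
  toFun e := (pderiv 0 : Derivation ℝ (MvPolynomial (Fin 2) ℝ) _).toLinearMap ^ e.toAdd 0 *
    (pderiv 1 : Derivation ℝ (MvPolynomial (Fin 2) ℝ) _).toLinearMap ^ e.toAdd 1
  map_one' := by simp
  map_mul' e e' := by
    rw [toAdd_mul, Finsupp.add_apply, Finsupp.add_apply, pow_add, pow_add]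
    exact ((commute_pderiv 0 1).pow_pow _ _).mul_mul_mul_comm _ _

noncomputable def apolarAction :
    MvPolynomial (Fin 2) ℝ →ₐ[ℝ] Module.End ℝ (MvPolynomial (Fin 2) ℝ) :=
  AddMonoidAlgebra.lift ℝ _ _ pderivMonoidHom

lemma diffOp_eq_apolarAction (h : MvPolynomial (Fin 2) ℝ) : diffOp h = apolarAction h := by
  ext1 f
  simp [diffOp, apolarAction, AddMonoidAlgebra.lift_apply, Finsupp.sum, pderivMonoidHom,
    Module.End.mul_apply, Module.End.pow_apply, MvPolynomial.support, MvPolynomial.coeff]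

lemma apolarAction_X (i : Fin 2) : apolarAction (X i) = (pderiv i).toLinearMap := by
  rw [X, ← single_eq_monomial, apolarAction, AddMonoidAlgebra.lift_single]
  fin_cases i <;> simp [pderivMonoidHom]

lemma apolarAction_lin_apply (a b : ℝ) (f : MvPolynomial (Fin 2) ℝ) :
    apolarAction (lin a b) f = a • pderiv 0 f + b • pderiv 1 f := by
  rw [lin, map_add, map_smul, map_smul, apolarAction_X, apolarAction_X]
  rfl

lemma apolarAction_lin_pderiv (a b : ℝ) (i : Fin 2) (f : MvPolynomial (Fin 2) ℝ) :
    apolarAction (lin a b) (pderiv i f) = pderiv i (apolarAction (lin a b) f) := by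
  simpa [apolarAction_X] using
    LinearMap.congr_fun ((Commute.all (lin a b) (X i)).map apolarAction).eq f

lemma apolarAction_lin_pow (a b α β : ℝ) (n : ℕ) :
    apolarAction (lin a b) (lin α β ^ n) = (n * (a * α + b * β)) • lin α β ^ (n - 1) := by
  have h0 : pderiv 0 (lin α β) = C α := by simp [lin, smul_eq_C_mul, pderiv_X]
  have h1 : pderiv 1 (lin α β) = C β := by simp [lin, smul_eq_C_mul, pderiv_X]
  rw [apolarAction_lin_apply, pderiv_pow, pderiv_pow, h0, h1]
  simp only [smul_eq_C_mul, map_add, map_mul, map_natCast]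
  ring

lemma isHomogeneous_lin_pow (a b : ℝ) (n : ℕ) : (lin a b ^ n).IsHomogeneous n := by
  simpa [lin, smul_eq_C_mul] using
    ((isHomogeneous_C_mul_X a 0).add (isHomogeneous_C_mul_X b 1)).pow n

lemma MvPolynomial.IsHomogeneous.apolarAction_lin {f : MvPolynomial (Fin 2) ℝ} {n : ℕ}
    (hf : f.IsHomogeneous n) (a b : ℝ) : (apolarAction (lin a b) f).IsHomogeneous (n - 1) := by
  rw [apolarAction_lin_apply, smul_eq_C_mul, smul_eq_C_mul]
  exact ((hf.pderiv).C_mul a).add ((hf.pderiv).C_mul b)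

lemma apolarAction_lin_eq_zero_of_isHomogeneous_zero {f : MvPolynomial (Fin 2) ℝ}
    (hf : f.IsHomogeneous 0) (a b : ℝ) : apolarAction (lin a b) f = 0 := by
  rw [hf.eq_C_coeff_zero_s5]
  simp [apolarAction_lin_apply]

lemma apolarAction_prod_lin_eq_zero_of_lt {ι : Type*} (a b : ι → ℝ) (s : Finset ι)
    {f : MvPolynomial (Fin 2) ℝ} {n : ℕ} (hf : f.IsHomogeneous n) (hn : n < s.card) :
    apolarAction (∏ i ∈ s, lin (a i) (b i)) f = 0 := by
  classical
  obtain ⟨j, hj⟩ := s.card_pos.mp (n.zero_le.trans_lt hn)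
  rw [← s.prod_erase_mul _ hj, map_mul, Module.End.mul_apply]
  cases n with
  | zero => rw [apolarAction_lin_eq_zero_of_isHomogeneous_zero hf, map_zero]
  | succ n =>
    exact apolarAction_prod_lin_eq_zero_of_lt a b _ (hf.apolarAction_lin _ _)
      (by rw [Finset.card_erase_of_mem hj]; omega)

lemma exists_eq_smul_lin_pow_of_apolarAction_lin_eq_zero {a b : ℝ} (hab : (a, b) ≠ (0, 0))
    {n : ℕ} {f : MvPolynomial (Fin 2) ℝ} (hf : f.IsHomogeneous n)
    (hker : apolarAction (lin a b) f = 0) : ∃ c : ℝ, f = c • lin b (-a) ^ n := by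
  induction n generalizing f with
  | zero =>
    refine ⟨coeff 0 f, ?_⟩
    rw [pow_zero, smul_eq_C_mul, mul_one]
    exact hf.eq_C_coeff_zero_s5
  | succ n ih =>
    have hpderiv (i : Fin 2) : ∃ c : ℝ, pderiv i f = c • lin b (-a) ^ n :=
      ih (by simpa using hf.pderiv) (by rw [apolarAction_lin_pderiv, hker, map_zero])
    obtain ⟨c₀, h₀⟩ := hpderiv 0
    obtain ⟨c₁, h₁⟩ := hpderiv 1
    have hnorm : (n + 1 : ℝ) * (a ^ 2 + b ^ 2) ≠ 0 := by
      obtain h | h : a ≠ 0 ∨ b ≠ 0 := by contrapose! hab; simp [hab]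
      all_goals positivity
    have euler := hf.sum_X_mul_pderiv
    rw [Fin.sum_univ_two, h₀, h₁] at euler
    rw [apolarAction_lin_apply, h₀, h₁] at hker
    have key : ((n + 1 : ℝ) * (a ^ 2 + b ^ 2)) • f = (b * c₀ - a * c₁) • lin b (-a) ^ (n + 1) := by
      simp only [lin, smul_eq_C_mul, nsmul_eq_mul] at euler hker ⊢
      simp only [map_add, map_mul, map_sub, map_neg, map_pow, map_natCast, map_one,
        Nat.cast_add, Nat.cast_one] at euler hker ⊢
      linear_combination -(C a ^ 2 + C b ^ 2) * euler + (C a * X 0 + C b * X 1) * hker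
    refine ⟨((n + 1 : ℝ) * (a ^ 2 + b ^ 2))⁻¹ * (b * c₀ - a * c₁), ?_⟩
    rw [mul_smul, ← key, inv_smul_smul₀ hnorm]

theorem exists_eq_sum_lin_pow_of_apolarAction_prod_eq_zero {ι : Type*} {a b : ι → ℝ}
    (s : Finset ι) (h0 : ∀ i ∈ s, (a i, b i) ≠ (0, 0))
    (hs : (s : Set ι).Pairwise fun i j => a i * b j ≠ a j * b i)
    {d : ℕ} {f : MvPolynomial (Fin 2) ℝ} (hf : f.IsHomogeneous d)
    (hann : apolarAction (∏ i ∈ s, lin (a i) (b i)) f = 0) :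
    ∃ c : ι → ℝ, f = ∑ i ∈ s, c i • lin (b i) (-a i) ^ d := by
  classical
  induction s using Finset.induction_on generalizing d f with
  | empty => exact ⟨0, by simpa using hann⟩
  | insert j s hj ih =>
    rw [Finset.prod_insert hj, mul_comm, map_mul, Module.End.mul_apply] at hann
    rw [Finset.coe_insert, Set.pairwise_insert] at hs
    obtain ⟨c', hc'⟩ : ∃ c' : ι → ℝ, apolarAction (lin (a j) (b j))
        (∑ i ∈ s, c' i • lin (b i) (-a i) ^ d) = apolarAction (lin (a j) (b j)) f := by
      cases d with
      | zero => exact ⟨0, by simp [apolarAction_lin_eq_zero_of_isHomogeneous_zero hf]⟩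
      | succ n =>
        obtain ⟨c, hc⟩ := ih (fun i hi => h0 i (Finset.mem_insert_of_mem hi)) hs.1
          (hf.apolarAction_lin _ _) hann
        -- `ℓ_j` maps `(ℓ_i^⊥) ^ (n + 1)` to `(n + 1) (a_j b_i - a_i b_j) (ℓ_i^⊥) ^ n`, a nonzero
        -- multiple, so the decomposition of `ℓ_j f` lifts termwise.
        refine ⟨fun i => c i / ((n + 1) * (a j * b i - a i * b j)), ?_⟩
        rw [hc, map_sum]
        refine Finset.sum_congr rfl fun i hi => ?_
        have hδ : a j * b i - a i * b j ≠ 0 :=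
          sub_ne_zero.mpr (hs.2 i hi (ne_of_mem_of_not_mem hi hj).symm).1
        rw [map_smul, apolarAction_lin_pow, smul_smul]
        congr 1
        field_simp
        push_cast
        ring
    have hf₀ : (∑ i ∈ s, c' i • lin (b i) (-a i) ^ d).IsHomogeneous d :=
      IsHomogeneous.sum _ _ _ fun i _ => by
        simpa only [smul_eq_C_mul] using (isHomogeneous_lin_pow _ _ d).C_mul (c' i)
    obtain ⟨cj, hcj⟩ := exists_eq_smul_lin_pow_of_apolarAction_lin_eq_zero
      (h0 j (Finset.mem_insert_self j s)) (hf.sub hf₀) (by rw [map_sub, hc', sub_self])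
    refine ⟨Function.update c' j cj, ?_⟩
    rw [Finset.sum_insert hj, Function.update_self,
      Finset.sum_congr rfl fun i hi => by rw [Function.update_of_ne (ne_of_mem_of_not_mem hi hj)],
      ← hcj, sub_add_cancel]

def HasRealRootedApolarForm (f : MvPolynomial (Fin 2) ℝ) (m : ℕ) : Prop :=
  ∃ a b : Fin m → ℝ, (∀ i, (a i, b i) ≠ (0, 0)) ∧ (∀ i j, i ≠ j → a i * b j ≠ a j * b i) ∧
    diffOp (∏ i, lin (a i) (b i)) f = 0

lemma hasRealRootedApolarForm_card {ι : Type*} (s : Finset ι) {a b : ι → ℝ}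
    (h0 : ∀ i ∈ s, (a i, b i) ≠ (0, 0))
    (hs : (s : Set ι).Pairwise fun i j => a i * b j ≠ a j * b i) {f : MvPolynomial (Fin 2) ℝ}
    (hann : apolarAction (∏ i ∈ s, lin (a i) (b i)) f = 0) :
    HasRealRootedApolarForm f s.card := by
  let e := s.equivFin.symm
  refine ⟨fun k => a (e k), fun k => b (e k), fun k => h0 _ (e k).2,
    fun k l hkl => hs (e k).2 (e l).2 fun h => hkl (e.injective (Subtype.ext h)), ?_⟩
  rwa [diffOp_eq_apolarAction, e.prod_comp fun i : s => lin (a i) (b i),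
    s.prod_coe_sort fun i => lin (a i) (b i)]

lemma hasRealRootedApolarForm_succ {f : MvPolynomial (Fin 2) ℝ} {d : ℕ}
    (hf : f.IsHomogeneous d) : HasRealRootedApolarForm f (d + 1) := by
  simpa using hasRealRootedApolarForm_card (Finset.range (d + 1)) (a := fun _ => 1)
    (b := fun i => (i : ℝ)) (by simp) (fun i _ j _ hij => by simpa [eq_comm] using hij)
    (apolarAction_prod_lin_eq_zero_of_lt _ _ _ hf (by simp))

lemma HasRealRootedApolarForm.hasWaringDecomp {f : MvPolynomial (Fin 2) ℝ} {d m : ℕ}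
    (h : HasRealRootedApolarForm f m) (hf : f.IsHomogeneous d) : hasWaringDecomp d m f := by
  obtain ⟨a, b, h0, hab, hann⟩ := h
  rw [diffOp_eq_apolarAction] at hann
  obtain ⟨c, hc⟩ := exists_eq_sum_lin_pow_of_apolarAction_prod_eq_zero Finset.univ
    (fun i _ => h0 i) (fun i _ j _ hij => hab i j hij) hf hann
  exact ⟨c, b, fun i => -a i, hc⟩

lemma Finset.exists_pairwise_subset_forall_exists_not_rel {ι : Type*} [DecidableEq ι]
    {r : ι → ι → Prop} (hr : ∀ i j, r i j → r j i) (hirr : ∀ i, ¬ r i i) (s : Finset ι) :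
    ∃ t ⊆ s, (t : Set ι).Pairwise r ∧ ∀ i ∈ s, ∃ j ∈ t, ¬ r i j := by
  induction s using Finset.induction_on with
  | empty => exact ⟨∅, subset_rfl, by simp, by simp⟩
  | insert i s _ ih =>
    obtain ⟨t, hts, ht, hcover⟩ := ih
    by_cases hi : ∀ j ∈ t, r i j
    · refine ⟨insert i t, Finset.insert_subset_insert i hts, ?_, ?_⟩
      · rw [Finset.coe_insert]
        exact ht.insert fun j hj _ => ⟨hi j hj, hr _ _ (hi j hj)⟩
      · simp only [Finset.mem_insert, forall_eq_or_imp, exists_eq_or_imp]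
        exact ⟨Or.inl (hirr i), fun k hk => Or.inr (hcover k hk)⟩
    · push Not at hi
      refine ⟨t, hts.trans (Finset.subset_insert i s), ht, ?_⟩
      simpa only [Finset.mem_insert, forall_eq_or_imp] using ⟨hi, hcover⟩

lemma apolarAction_prod_lin_lin_pow_eq_zero {ι : Type*} (s : Finset ι) (a b : ι → ℝ) {j : ι}
    (hj : j ∈ s) {α β : ℝ} (hjαβ : a j * α + b j * β = 0) (d : ℕ) :
    apolarAction (∏ i ∈ s, lin (a i) (b i)) (lin α β ^ d) = 0 := by
  classical
  rw [← s.prod_erase_mul _ hj, map_mul, Module.End.mul_apply, apolarAction_lin_pow, hjαβ,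
    mul_zero, zero_smul, map_zero]

lemma exists_hasRealRootedApolarForm_le {f : MvPolynomial (Fin 2) ℝ} {d r : ℕ}
    (hf : f.IsHomogeneous d) (h : hasWaringDecomp d r f) :
    ∃ m ≤ r, HasRealRootedApolarForm f m := by
  classical
  obtain ⟨c, α, β, rfl⟩ := h
  rcases eq_or_ne d 0 with rfl | hd
  · rcases r.eq_zero_or_pos with rfl | hr
    · exact ⟨0, le_rfl, Fin.elim0, Fin.elim0, fun i => i.elim0, fun i => i.elim0,
        by simp [diffOp_eq_apolarAction]⟩
    · exact ⟨1, hr, hasRealRootedApolarForm_succ hf⟩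
  obtain ⟨t, hts, ht, hcover⟩ := Finset.exists_pairwise_subset_forall_exists_not_rel
    (r := fun i j => α i * β j ≠ α j * β i) (fun i j h h' => h h'.symm) (fun i h => h rfl)
    (Finset.univ.filter fun i => (α i, β i) ≠ (0, 0))
  refine ⟨t.card, t.card_le_univ.trans_eq (Fintype.card_fin r),
    hasRealRootedApolarForm_card t (a := β) (b := fun i => -α i)
      (fun i hi => by simpa [and_comm] using (Finset.mem_filter.mp (hts hi)).2)
      (fun i hi j hj hij h => ht hi hj hij (by linarith)) ?_⟩
  rw [map_sum]
  refine Finset.sum_eq_zero fun k _ => ?_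
  rw [map_smul]
  by_cases hk : (α k, β k) = (0, 0)
  · obtain ⟨hα, hβ⟩ := Prod.mk.inj hk
    simp [hα, hβ, lin, zero_pow hd]
  obtain ⟨j, hj, hjk⟩ := hcover k (by simpa using hk)
  rw [apolarAction_prod_lin_lin_pow_eq_zero t _ _ hj (by linarith [not_not.mp hjk]), smul_zero]

theorem stmt_5_general (d : ℕ) (f : MvPolynomial (Fin 2) ℝ) (hf : f.IsHomogeneous d) :
    waringRank d f = sInf {m : ℕ | ∃ a b : Fin m → ℝ,
      (∀ i, (a i, b i) ≠ (0, 0)) ∧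
      (∀ i j, i ≠ j → a i * b j ≠ a j * b i) ∧
      diffOp (∏ i, lin (a i) (b i)) f = 0} := by
  change waringRank d f = sInf {m | HasRealRootedApolarForm f m}
  have hmin := Nat.sInf_mem (s := {m | HasRealRootedApolarForm f m})
    ⟨d + 1, hasRealRootedApolarForm_succ hf⟩
  have hdecomp : hasWaringDecomp d (sInf {m | HasRealRootedApolarForm f m}) f :=
    HasRealRootedApolarForm.hasWaringDecomp hmin hf
  have hrank : hasWaringDecomp d (waringRank d f) f :=
    Nat.sInf_mem (s := {r | hasWaringDecomp d r f}) ⟨_, hdecomp⟩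
  obtain ⟨m, hm, hmf⟩ := exists_hasRealRootedApolarForm_le hf hrank
  exact le_antisymm (Nat.sInf_le hdecomp) ((Nat.sInf_le hmf).trans hm)

/-- Sylvester: the real Waring rank of a nonzero binary form f of degree d is
the least m such that (f^⊥)_m contains a product of m pairwise
non-proportional real linear forms. -/
theorem stmt_5 (d : ℕ) (f : MvPolynomial (Fin 2) ℝ) (hf : f.IsHomogeneous d)
    (hf0 : f ≠ 0) :
    waringRank d f = sInf {m : ℕ | ∃ a b : Fin m → ℝ,
      (∀ i, (a i, b i) ≠ (0, 0)) ∧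
      (∀ i j, i ≠ j → a i * b j ≠ a j * b i) ∧
      diffOp (∏ i, lin (a i) (b i)) f = 0} :=
  stmt_5_general d f hf
end
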